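/- arXiv:2302.10092 — 5 statements merged into one kernel-verified Lean document; each statement's English description precedes it below -/
import Mathlib

section
/- Let (Ω, P) be a probability space and θ > 0. Let (α_i)_{i∈ℕ} and (σ_i)_{i∈ℕ} be real-valued random variables such that the combined family {α_i} ∪ {σ_i} is mutually independent, the α_i are identically distributed, and the σ_i are identically distributed. Suppose exp(θ·α_0) and exp(−θ·σ_0) are integrable, and set a := E[exp(θ·α_0)], b := E[exp(−θ·σ_0)], with a·b < 1. Then for all natural numbers t and w, P(∃ u ∈ {0,…,t}, ∑_{i=u}^{t−1} α_i ≥ ∑_{i=u}^{t+w−1} σ_i) ≤ b^w / (1 − a·b). -/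
open MeasureTheory ProbabilityTheory Real

/-!
The event is the union over `u ≤ t` of the events
`∑_{i=u}^{t-1} α i - ∑_{i=u}^{t+w-1} σ i ≥ 0`.
By independence the Chernoff bound at `θ` for the `u`-th event factorises into
`a ^ (t - u) * b ^ (t + w - u) = (a * b) ^ (t - u) * b ^ w`, and the union bound sums these
into a geometric series in `a * b`, dominated by `b ^ w / (1 - a * b)`.
-/

section Chernoff

variable {Ω ι : Type*} [MeasurableSpace Ω] {μ : Measure Ω} [IsProbabilityMeasure μ]
  {X : ι → Ω → ℝ} {t : ℝ}

-- Integrability of `exp (t * ∑ X i)` comes for free: its mgf, a product of positive mgfs,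
-- is positive.
theorem ProbabilityTheory.iIndepFun.measureReal_sum_nonneg_le_prod_mgf (h_indep : iIndepFun X μ)
    (h_meas : ∀ i, AEMeasurable (X i) μ) (ht : 0 ≤ t) (s : Finset ι)
    (h_int : ∀ i ∈ s, Integrable (fun ω => exp (t * X i ω)) μ) :
    μ.real {ω | 0 ≤ ∑ i ∈ s, X i ω} ≤ ∏ i ∈ s, mgf (X i) μ t := by
  have h_mgf := h_indep.mgf_sum₀ (t := t) h_meas s
  have h_pos : 0 < mgf (∑ i ∈ s, X i) μ t :=
    h_mgf ▸ Finset.prod_pos fun i hi => mgf_pos (h_int i hi)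
  simpa [h_mgf] using measure_ge_le_exp_mul_mgf 0 ht (mgf_pos_iff.mp h_pos)

end Chernoff

theorem sum_range_pow_mul_pow_le {a b : ℝ} (ha : 0 ≤ a) (hb : 0 ≤ b) (hab : a * b < 1)
    (t w : ℕ) :
    ∑ u ∈ Finset.range (t + 1), a ^ (t - u) * b ^ (t + w - u) ≤ b ^ w / (1 - a * b) := by
  have h_reindex : ∑ u ∈ Finset.range (t + 1), a ^ (t - u) * b ^ (t + w - u)
      = b ^ w * ∑ k ∈ Finset.range (t + 1), (a * b) ^ k := by
    rw [Finset.mul_sum, ← Finset.sum_range_reflect (fun k => b ^ w * (a * b) ^ k)]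
    refine Finset.sum_congr rfl fun u hu => ?_
    have hut : u ≤ t := Nat.lt_succ_iff.mp (Finset.mem_range.mp hu)
    rw [show t + w - u = (t - u) + w by omega, show t + 1 - 1 - u = t - u by omega]
    ring
  have h_geom : ∑ k ∈ Finset.range (t + 1), (a * b) ^ k ≤ 1 / (1 - a * b) := by
    have h := geom_sum_Ico_le_of_lt_one (m := 0) (n := t + 1) (mul_nonneg ha hb) hab
    rwa [← Finset.range_eq_Ico, pow_zero] at h
  calc _ = b ^ w * ∑ k ∈ Finset.range (t + 1), (a * b) ^ k := h_reindex
    _ ≤ b ^ w * (1 / (1 - a * b)) := mul_le_mul_of_nonneg_left h_geom (pow_nonneg hb w)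
    _ = b ^ w / (1 - a * b) := mul_one_div _ _

theorem ProbabilityTheory.IdentDistrib.integrable_exp_mul {Ω Ω' : Type*} [MeasurableSpace Ω]
    [MeasurableSpace Ω'] {μ : Measure Ω} {μ' : Measure Ω'} {X : Ω → ℝ} {Y : Ω' → ℝ}
    (h : IdentDistrib X Y μ μ') (t : ℝ) (hY : Integrable (fun ω => exp (t * Y ω)) μ') :
    Integrable (fun ω => exp (t * X ω)) μ :=
  (h.comp (measurable_const_mul t).exp).integrable_iff.mpr hY

section Queue

variable {Ω ι κ : Type*} [MeasurableSpace Ω] {P : Measure Ω} [IsProbabilityMeasure P]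
  {θ : ℝ} {α : ι → Ω → ℝ} {σ : κ → Ω → ℝ} {A S : Ω → ℝ}

theorem measureReal_sum_le_sum_le_mgf_pow (hθ : 0 ≤ θ) (hindep : iIndepFun (Sum.elim α σ) P)
    (hidα : ∀ i, IdentDistrib (α i) A P P) (hidσ : ∀ j, IdentDistrib (σ j) S P P)
    (hintA : Integrable (fun ω => exp (θ * A ω)) P)
    (hintS : Integrable (fun ω => exp (-θ * S ω)) P) (s : Finset ι) (s' : Finset κ) :
    P.real {ω | ∑ j ∈ s', σ j ω ≤ ∑ i ∈ s, α i ω}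
      ≤ mgf A P θ ^ s.card * mgf S P (-θ) ^ s'.card := by
  set X : ι ⊕ κ → Ω → ℝ := Sum.elim α fun j => -σ j
  have hX_indep : iIndepFun X P := by
    convert hindep.comp (fun k => Sum.elim (fun _ => id) (fun _ => Neg.neg) k)
      (by rintro (i | j); exacts [measurable_id, measurable_neg]) using 1
    ext (i | j) <;> rfl
  have hX_meas : ∀ k, AEMeasurable (X k) P := by
    rintro (i | j)
    exacts [(hidα i).aemeasurable_fst, (hidσ j).aemeasurable_fst.neg]
  have hX_int : ∀ k, Integrable (fun ω => exp (θ * X k ω)) P := by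
    rintro (i | j)
    · exact (hidα i).integrable_exp_mul θ hintA
    · simpa [X] using (hidσ j).integrable_exp_mul (-θ) hintS
  have h_event : {ω | ∑ j ∈ s', σ j ω ≤ ∑ i ∈ s, α i ω}
      = {ω | 0 ≤ ∑ k ∈ s.disjSum s', X k ω} := by
    ext ω
    simp [X, Finset.sum_disjSum, ← sub_eq_add_neg]
  have h_mgf : ∏ k ∈ s.disjSum s', mgf (X k) P θ
      = mgf A P θ ^ s.card * mgf S P (-θ) ^ s'.card := by
    rw [Finset.prod_disjSum]
    congr 1
    · exact Finset.prod_eq_pow_card fun i _ => by simp [X, mgf_congr_identDistrib (hidα i)]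
    · exact Finset.prod_eq_pow_card fun j _ => by
        simp [X, mgf_neg, mgf_congr_identDistrib (hidσ j)]
  rw [h_event, ← h_mgf]
  exact hX_indep.measureReal_sum_nonneg_le_prod_mgf hX_meas hθ _ fun k _ => hX_int k

end Queue

theorem stmt_3_general {Ω : Type*} [MeasurableSpace Ω] (P : Measure Ω) [IsProbabilityMeasure P]
    (θ : ℝ) (hθ : 0 < θ) (α σ : ℕ → Ω → ℝ)
    (hindep : iIndepFun (Sum.elim α σ) P)
    (hidα : ∀ i, IdentDistrib (α i) (α 0) P P)
    (hidσ : ∀ i, IdentDistrib (σ i) (σ 0) P P)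
    (hinta : Integrable (fun ω => Real.exp (θ * α 0 ω)) P)
    (hintb : Integrable (fun ω => Real.exp (-θ * σ 0 ω)) P)
    (a b : ℝ)
    (ha : a = ∫ ω, Real.exp (θ * α 0 ω) ∂P)
    (hb : b = ∫ ω, Real.exp (-θ * σ 0 ω) ∂P)
    (hab : a * b < 1) (t w : ℕ) :
    P {ω | ∃ u ≤ t, ∑ i ∈ Finset.Ico u t, α i ω ≥ ∑ i ∈ Finset.Ico u (t + w), σ i ω}
      ≤ ENNReal.ofReal (b ^ w / (1 - a * b)) := by
  have ha' : a = mgf (α 0) P θ := ha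
  have hb' : b = mgf (σ 0) P (-θ) := hb
  set E : ℕ → Set Ω :=
    fun u => {ω | ∑ i ∈ Finset.Ico u (t + w), σ i ω ≤ ∑ i ∈ Finset.Ico u t, α i ω}
  have h_union :
      {ω | ∃ u ≤ t, ∑ i ∈ Finset.Ico u t, α i ω ≥ ∑ i ∈ Finset.Ico u (t + w), σ i ω}
        = ⋃ u ∈ Finset.range (t + 1), E u := by
    ext ω
    simp [E]
  have h_event : ∀ u, P.real (E u) ≤ a ^ (t - u) * b ^ (t + w - u) := fun u => by
    simpa [ha', hb'] using measureReal_sum_le_sum_le_mgf_pow hθ.le hindep hidα hidσ hinta hintb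
      (Finset.Ico u t) (Finset.Ico u (t + w))
  rw [← ofReal_measureReal, h_union]
  refine ENNReal.ofReal_le_ofReal ?_
  calc P.real (⋃ u ∈ Finset.range (t + 1), E u)
      ≤ ∑ u ∈ Finset.range (t + 1), P.real (E u) := measureReal_biUnion_finset_le _ _
    _ ≤ ∑ u ∈ Finset.range (t + 1), a ^ (t - u) * b ^ (t + w - u) :=
        Finset.sum_le_sum fun u _ => h_event u
    _ ≤ b ^ w / (1 - a * b) :=
        sum_range_pow_mul_pow_le (ha' ▸ mgf_nonneg) (hb' ▸ mgf_nonneg) hab t w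

/-- Theorem 2 of the paper (UB-SDVP): with i.i.d. per-slot arrival increments `α i`
and i.i.d. per-slot service increments `σ i`, the whole family being mutually
independent, per-slot arrival MGF `a` and service inverse-MGF `b` at `θ` with
stability condition `a * b < 1`, the probability that the cumulative arrivals
`∑_{i=u}^{t-1} α i` exceed the cumulative service `∑_{i=u}^{t+w-1} σ i` for some
`u ≤ t` is at most `b ^ w / (1 - a * b)`. -/
theorem stmt_3 {Ω : Type*} [MeasurableSpace Ω] (P : Measure Ω) [IsProbabilityMeasure P]
    (θ : ℝ) (hθ : 0 < θ) (α σ : ℕ → Ω → ℝ)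
    (hmα : ∀ i, Measurable (α i)) (hmσ : ∀ i, Measurable (σ i))
    (hindep : iIndepFun (Sum.elim α σ) P)
    (hidα : ∀ i, IdentDistrib (α i) (α 0) P P)
    (hidσ : ∀ i, IdentDistrib (σ i) (σ 0) P P)
    (hinta : Integrable (fun ω => Real.exp (θ * α 0 ω)) P)
    (hintb : Integrable (fun ω => Real.exp (-θ * σ 0 ω)) P)
    (a b : ℝ)
    (ha : a = ∫ ω, Real.exp (θ * α 0 ω) ∂P)
    (hb : b = ∫ ω, Real.exp (-θ * σ 0 ω) ∂P)
    (hab : a * b < 1) (t w : ℕ) :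
    P {ω | ∃ u ≤ t, ∑ i ∈ Finset.Ico u t, α i ω ≥ ∑ i ∈ Finset.Ico u (t + w), σ i ω}
      ≤ ENNReal.ofReal (b ^ w / (1 - a * b)) :=
  stmt_3_general P θ hθ α σ hindep hidα hidσ hinta hintb a b ha hb hab t w
end

section
/- Fix a real constant c ≥ 0. The function γ ↦ (1 + γ) · (ln(1 + γ) − c) / √((1 + γ)² − 1) is strictly increasing on the interval (0, ∞). -/
/-!
Substitute `u = 1 + γ` and write `s = √(u² - 1)`, so `s' = u / s`. The derivative of
`u (log u - c) / s` is `((log u - c + 1) s² - u² (log u - c)) / s³ = (u² - 1 - (log u - c)) / s³`,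
which is positive for `u > 1` because `log u - c ≤ log u < u - 1 < u² - 1`.
-/

open Real Set

lemma hasDerivAt_mul_log_sub_div_sqrt (c : ℝ) {u : ℝ} (hu : 1 < u) :
    HasDerivAt (fun u : ℝ => u * (log u - c) / √(u ^ 2 - 1))
      ((u ^ 2 - 1 - (log u - c)) / √(u ^ 2 - 1) ^ 3) u := by
  have hu₀ : 0 < u := by linarith
  have hs : 0 < u ^ 2 - 1 := by nlinarith
  have hsqrt : 0 < √(u ^ 2 - 1) := sqrt_pos.mpr hs
  have hnum : HasDerivAt (fun u : ℝ => u * (log u - c)) (log u - c + 1) u := by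
    refine ((hasDerivAt_id' u).fun_mul ((hasDerivAt_log hu₀.ne').sub_const c)).congr_deriv ?_
    field_simp
  have hden : HasDerivAt (fun u : ℝ => √(u ^ 2 - 1)) (u / √(u ^ 2 - 1)) u := by
    convert ((hasDerivAt_pow 2 u).sub_const 1).sqrt hs.ne' using 1
    field_simp
    ring
  refine (hnum.fun_div hden hsqrt.ne').congr_deriv ?_
  have hsq : √(u ^ 2 - 1) ^ 2 = u ^ 2 - 1 := sq_sqrt hs.le
  field_simp
  rw [hsq]
  ring

lemma log_sub_lt_sq_sub_one {c u : ℝ} (hc : 0 ≤ c) (hu : 1 < u) : log u - c < u ^ 2 - 1 := by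
  have := log_lt_sub_one_of_pos (by linarith : 0 < u) hu.ne'
  nlinarith

lemma strictMonoOn_mul_log_sub_div_sqrt {c : ℝ} (hc : 0 ≤ c) :
    StrictMonoOn (fun u : ℝ => u * (log u - c) / √(u ^ 2 - 1)) (Ioi 1) := by
  refine strictMonoOn_of_deriv_pos (convex_Ioi 1)
    (fun u hu => (hasDerivAt_mul_log_sub_div_sqrt c hu).continuousAt.continuousWithinAt)
    fun u hu => ?_
  rw [interior_Ioi] at hu
  have hsqrt : 0 < √(u ^ 2 - 1) := sqrt_pos.mpr (by nlinarith [mem_Ioi.mp hu])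
  rw [(hasDerivAt_mul_log_sub_div_sqrt c hu).deriv]
  exact div_pos (sub_pos.mpr (log_sub_lt_sq_sub_one hc hu)) (pow_pos hsqrt 3)

/-- Core monotonicity claim in the proof of Theorem 5: for a constant `c ≥ 0`, the
function `γ ↦ (1+γ)(ln(1+γ) - c)/√((1+γ)² - 1)` is strictly increasing on `(0, ∞)`. -/
theorem stmt_5 (c : ℝ) (hc : 0 ≤ c) :
    StrictMonoOn (fun γ : ℝ => (1 + γ) * (Real.log (1 + γ) - c) / Real.sqrt ((1 + γ) ^ 2 - 1))
      (Set.Ioi 0) := fun a ha b hb hab =>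
  strictMonoOn_mul_log_sub_div_sqrt hc (by simpa using ha) (by simpa using hb) (by linarith)
end

section
/- The function g̃(γ) = ln(1 + γ) / (γ·(γ + 2)) is strictly decreasing on the interval (0, ∞). -/
/-!
Writing `t = (1 + γ)²`, we have `γ (γ + 2) = t - 1` and `log (1 + γ) = log t / 2`, so `g̃(γ)` is half
the slope of the chord of `log` between `1` and `t`. By strict concavity of `log` these chord
slopes strictly decrease in `t`, and `t` strictly increases with `γ > 0`.
-/

open Real Set

theorem strictAntiOn_log_div_sub_one : StrictAntiOn (fun t : ℝ => log t / (t - 1)) (Ioi 1) := by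
  intro x (hx : 1 < x) y (hy : 1 < y) hxy
  have h := strictConcaveOn_log_Ioi.secant_strict_mono (mem_Ioi.2 one_pos)
    (mem_Ioi.2 (by linarith)) (mem_Ioi.2 (by linarith)) hx.ne' hy.ne' hxy
  simpa only [log_one, sub_zero] using h

theorem log_one_add_div_mul_add_two (γ : ℝ) :
    log (1 + γ) / (γ * (γ + 2)) = log ((1 + γ) ^ 2) / ((1 + γ) ^ 2 - 1) / 2 := by
  rw [log_pow, show (1 + γ) ^ 2 - 1 = γ * (γ + 2) by ring]
  push_cast
  ring

/-- Auxiliary claim in the proof of Theorem 5: `g̃(γ) = ln(1+γ)/(γ(γ+2))` is strictly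
decreasing on `(0, ∞)`. -/
theorem stmt_7 :
    StrictAntiOn (fun γ : ℝ => Real.log (1 + γ) / (γ * (γ + 2))) (Set.Ioi 0) := by
  intro x (hx : 0 < x) y (hy : 0 < y) hxy
  simp only [log_one_add_div_mul_add_two]
  have hx1 : 1 < (1 + x) ^ 2 := one_lt_pow₀ (by linarith) two_ne_zero
  have hy1 : 1 < (1 + y) ^ 2 := one_lt_pow₀ (by linarith) two_ne_zero
  have hsq : (1 + x) ^ 2 < (1 + y) ^ 2 := by gcongr
  exact div_lt_div_of_pos_right (strictAntiOn_log_div_sub_one hx1 hy1 hsq) two_pos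
end

section
/- Let n be a nonempty finite type, let G be an n × n complex positive definite matrix, and let d : n → ℂ with d ≠ 0. Then the vector x★ = G⁻¹·d is nonzero and achieves equality in the generalized Cauchy–Schwarz bound: |x★* ⬝ d|² = Re(x★* ⬝ (G·x★)) · Re(d* ⬝ (G⁻¹·d)). Consequently, Re(d* ⬝ (G⁻¹·d)) is the maximum over all nonzero x : n → ℂ of the generalized Rayleigh quotient |x* ⬝ d|² / Re(x* ⬝ (G·x)). -/
/-!
`⟪x, y⟫ = xᴴ G y` is an inner product, so Cauchy–Schwarz bounds `|xᴴ G y|² / xᴴ G x`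
by `yᴴ G y`, with equality at `x = y`.
For `y = G⁻¹ d` we have `G y = d` and `yᴴ G y = dᴴ G⁻¹ d`.
-/

open Matrix
open scoped ComplexOrder

namespace Matrix

theorem mulVec_nonsing_inv_mulVec {n α : Type*} [Fintype n] [DecidableEq n] [CommRing α]
    {G : Matrix n n α} (hG : IsUnit G) (d : n → α) : G *ᵥ (G⁻¹ *ᵥ d) = d := by
  rw [mulVec_mulVec, mul_nonsing_inv _ (G.isUnit_iff_isUnit_det.mp hG), one_mulVec]

theorem IsHermitian.star_mulVec_dotProduct {n α : Type*} [Fintype n] [CommSemiring α]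
    [StarRing α] {G : Matrix n n α} (hG : G.IsHermitian) (x y : n → α) :
    star (G *ᵥ x) ⬝ᵥ y = star x ⬝ᵥ (G *ᵥ y) := by
  rw [star_mulVec, hG.eq, dotProduct_mulVec]

variable {𝕜 n : Type*} [RCLike 𝕜] [Fintype n] {G : Matrix n n 𝕜}

theorem PosSemidef.norm_star_dotProduct_mulVec_sq_le (hG : G.PosSemidef) (x y : n → 𝕜) :
    ‖star x ⬝ᵥ (G *ᵥ y)‖ ^ 2 ≤
      RCLike.re (star x ⬝ᵥ (G *ᵥ x)) * RCLike.re (star y ⬝ᵥ (G *ᵥ y)) := by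
  let := G.toSeminormedAddCommGroup hG
  let := G.toInnerProductSpace hG
  have hinner : ∀ u v : n → 𝕜, inner 𝕜 u v = star u ⬝ᵥ (G *ᵥ v) := fun _ _ =>
    dotProduct_comm _ _
  simp only [← hinner, ← norm_sq_eq_re_inner, ← mul_pow]
  exact pow_le_pow_left₀ (norm_nonneg _) (norm_inner_le_norm x y) 2

theorem PosSemidef.norm_star_dotProduct_mulVec_self (hG : G.PosSemidef) (x : n → 𝕜) :
    ‖star x ⬝ᵥ (G *ᵥ x)‖ = RCLike.re (star x ⬝ᵥ (G *ᵥ x)) := by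
  obtain ⟨hre, him⟩ := RCLike.nonneg_iff.mp (hG.dotProduct_mulVec_nonneg x)
  rw [← RCLike.re_add_im (star x ⬝ᵥ (G *ᵥ x)), him]
  simp [abs_of_nonneg hre]

theorem PosDef.isGreatest_norm_star_dotProduct_mulVec_sq_div (hG : G.PosDef) {y : n → 𝕜}
    (hy : y ≠ 0) :
    IsGreatest {q : ℝ | ∃ x : n → 𝕜, x ≠ 0 ∧
        q = ‖star x ⬝ᵥ (G *ᵥ y)‖ ^ 2 / RCLike.re (star x ⬝ᵥ (G *ᵥ x))}
      (RCLike.re (star y ⬝ᵥ (G *ᵥ y))) := by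
  refine ⟨⟨y, hy, ?_⟩, ?_⟩
  · rw [hG.posSemidef.norm_star_dotProduct_mulVec_self, sq,
      mul_div_cancel_right₀ _ (hG.re_dotProduct_pos hy).ne']
  · rintro q ⟨x, hx, rfl⟩
    rw [div_le_iff₀ (hG.re_dotProduct_pos hx), mul_comm]
    exact hG.posSemidef.norm_star_dotProduct_mulVec_sq_le x y

end Matrix

theorem stmt_10_general {n : Type*} [Fintype n] [DecidableEq n]
    (G : Matrix n n ℂ) (hG : G.PosDef) (d : n → ℂ) (hd : d ≠ 0) :
    G⁻¹ *ᵥ d ≠ 0 ∧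
    ‖star (G⁻¹ *ᵥ d) ⬝ᵥ d‖ ^ 2
      = (star (G⁻¹ *ᵥ d) ⬝ᵥ (G *ᵥ (G⁻¹ *ᵥ d))).re * (star d ⬝ᵥ (G⁻¹ *ᵥ d)).re ∧
    IsGreatest {q : ℝ | ∃ x : n → ℂ, x ≠ 0 ∧
        q = ‖star x ⬝ᵥ d‖ ^ 2 / (star x ⬝ᵥ (G *ᵥ x)).re}
      ((star d ⬝ᵥ (G⁻¹ *ᵥ d)).re) := by
  set y := G⁻¹ *ᵥ d
  have hGy : G *ᵥ y = d := mulVec_nonsing_inv_mulVec hG.isUnit d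
  have hy : y ≠ 0 := fun h => hd (by rw [← hGy, h, mulVec_zero])
  rw [← hGy, hG.isHermitian.star_mulVec_dotProduct,
    hG.posSemidef.norm_star_dotProduct_mulVec_self]
  exact ⟨hy, sq _, hG.isGreatest_norm_star_dotProduct_mulVec_sq_div hy⟩

/-- Attainment part of Theorem 6: for positive definite `G` and `d ≠ 0`, the vector
`x★ = G⁻¹ d` is nonzero, achieves equality in the generalized Cauchy–Schwarz bound,
and `Re(d* ⬝ G⁻¹ d)` is the maximum of the generalized Rayleigh quotient
`|x* ⬝ d|² / Re(x* ⬝ (G x))` over all nonzero `x`. -/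
theorem stmt_10 {n : Type*} [Fintype n] [DecidableEq n] [Nonempty n]
    (G : Matrix n n ℂ) (hG : G.PosDef) (d : n → ℂ) (hd : d ≠ 0) :
    G⁻¹ *ᵥ d ≠ 0 ∧
    ‖star (G⁻¹ *ᵥ d) ⬝ᵥ d‖ ^ 2
      = (star (G⁻¹ *ᵥ d) ⬝ᵥ (G *ᵥ (G⁻¹ *ᵥ d))).re * (star d ⬝ᵥ (G⁻¹ *ᵥ d)).re ∧
    IsGreatest {q : ℝ | ∃ x : n → ℂ, x ≠ 0 ∧
        q = ‖star x ⬝ᵥ d‖ ^ 2 / (star x ⬝ᵥ (G *ᵥ x)).re}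
      ((star d ⬝ᵥ (G⁻¹ *ᵥ d)).re) :=
  stmt_10_general G hG d hd
end

section
/- Let n be a nonempty finite type, let G be an n × n complex positive definite matrix, and let d : n → ℂ be such that G − d·d* is positive definite (d·d* being the outer product). Set τ = Re(d* ⬝ (G⁻¹·d)), so 0 ≤ τ < 1. Then for every nonzero x : n → ℂ, |x* ⬝ d|² / Re(x* ⬝ ((G − d·d*)·x)) ≤ τ / (1 − τ), and equality holds for x = G⁻¹·d when d ≠ 0. -/
open Matrix
open scoped ComplexOrder

/-!
Write `A = Re(x* G x)` and `B = |x* d|²`, so that the SINR of `x` is `B / (A - B)`.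
Cauchy–Schwarz for the inner product `x* G y`, applied to `x` and `G⁻¹ d`, gives `B ≤ τ A`,
which is equivalent to `B / (A - B) ≤ τ / (1 - τ)`. At `x = G⁻¹ d` both `x* G x` and `x* d`
equal `τ`, so the bound is attained, and positivity of `G - d d*` there gives `τ - τ² > 0`.
-/

namespace Matrix

variable {𝕜 n : Type*} [RCLike 𝕜] [Fintype n]

open RCLike

theorem PosSemidef.norm_star_dotProduct_mulVec_sq_le_s12 {M : Matrix n n 𝕜} (hM : M.PosSemidef)
    (x y : n → 𝕜) :
    ‖star x ⬝ᵥ (M *ᵥ y)‖ ^ 2 ≤ re (star x ⬝ᵥ (M *ᵥ x)) * re (star y ⬝ᵥ (M *ᵥ y)) := by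
  let := M.toSeminormedAddCommGroup hM
  let := M.toInnerProductSpace hM
  have h : ‖(M *ᵥ y) ⬝ᵥ star x‖ * ‖(M *ᵥ x) ⬝ᵥ star y‖
      ≤ re ((M *ᵥ x) ⬝ᵥ star x) * re ((M *ᵥ y) ⬝ᵥ star y) :=
    inner_mul_inner_self_le (𝕜 := 𝕜) x y
  have hyx : ‖star y ⬝ᵥ (M *ᵥ x)‖ = ‖star x ⬝ᵥ (M *ᵥ y)‖ := by
    rw [← norm_star, star_dotProduct, star_mulVec, ← dotProduct_mulVec, hM.isHermitian.eq,
      star_star]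
  simpa only [dotProduct_comm _ (star _), hyx, ← sq] using h

theorem IsHermitian.star_mulVec_dotProduct_s12 {A : Matrix n n 𝕜} (hA : A.IsHermitian)
    (x y : n → 𝕜) : star (A *ᵥ x) ⬝ᵥ y = star x ⬝ᵥ (A *ᵥ y) := by
  rw [star_mulVec, hA.eq, dotProduct_mulVec]

theorem IsHermitian.ofReal_re_star_dotProduct_mulVec_self {A : Matrix n n 𝕜}
    (hA : A.IsHermitian) (x : n → 𝕜) :
    (re (star x ⬝ᵥ (A *ᵥ x)) : 𝕜) = star x ⬝ᵥ (A *ᵥ x) :=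
  conj_eq_iff_re.mp (conj_eq_iff_im.mpr (hA.im_star_dotProduct_mulVec_self x))

theorem re_star_dotProduct_sub_vecMulVec_mulVec (M : Matrix n n 𝕜) (d x : n → 𝕜) :
    re (star x ⬝ᵥ ((M - vecMulVec d (star d)) *ᵥ x))
      = re (star x ⬝ᵥ (M *ᵥ x)) - ‖star x ⬝ᵥ d‖ ^ 2 := by
  have hconj : star d ⬝ᵥ x = starRingEnd 𝕜 (star x ⬝ᵥ d) := star_dotProduct d x
  rw [sub_mulVec, dotProduct_sub, vecMulVec_mulVec, op_smul_eq_smul, dotProduct_smul,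
    smul_eq_mul, hconj, RCLike.conj_mul, map_sub, ← ofReal_pow, ofReal_re]

section Inverse

variable [DecidableEq n] {G : Matrix n n 𝕜}

theorem PosDef.mulVec_inv_mulVec (hG : G.PosDef) (d : n → 𝕜) : G *ᵥ (G⁻¹ *ᵥ d) = d := by
  rw [mulVec_mulVec, mul_nonsing_inv G ((isUnit_iff_isUnit_det G).1 hG.isUnit), one_mulVec]

theorem PosDef.star_inv_mulVec_dotProduct (hG : G.PosDef) (d : n → 𝕜) :
    star (G⁻¹ *ᵥ d) ⬝ᵥ d = (re (star d ⬝ᵥ (G⁻¹ *ᵥ d)) : 𝕜) := by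
  rw [hG.isHermitian.inv.star_mulVec_dotProduct_s12,
    hG.isHermitian.inv.ofReal_re_star_dotProduct_mulVec_self]

theorem PosDef.norm_star_dotProduct_sq_le (hG : G.PosDef) (x d : n → 𝕜) :
    ‖star x ⬝ᵥ d‖ ^ 2 ≤ re (star x ⬝ᵥ (G *ᵥ x)) * re (star d ⬝ᵥ (G⁻¹ *ᵥ d)) := by
  simpa only [hG.mulVec_inv_mulVec, hG.star_inv_mulVec_dotProduct, ofReal_re]
    using hG.posSemidef.norm_star_dotProduct_mulVec_sq_le_s12 x (G⁻¹ *ᵥ d)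

theorem PosDef.re_star_inv_mulVec_dotProduct_sub_vecMulVec (hG : G.PosDef) (d : n → 𝕜) :
    re (star (G⁻¹ *ᵥ d) ⬝ᵥ ((G - vecMulVec d (star d)) *ᵥ (G⁻¹ *ᵥ d)))
      = re (star d ⬝ᵥ (G⁻¹ *ᵥ d)) - re (star d ⬝ᵥ (G⁻¹ *ᵥ d)) ^ 2 := by
  rw [re_star_dotProduct_sub_vecMulVec_mulVec, hG.mulVec_inv_mulVec,
    hG.star_inv_mulVec_dotProduct, ofReal_re, norm_ofReal, sq_abs]

end Inverse

end Matrix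

theorem stmt_12_general {n : Type*} [Fintype n] [DecidableEq n]
    (G : Matrix n n ℂ) (hG : G.PosDef) (d : n → ℂ)
    (hGd : (G - vecMulVec d (star d)).PosDef)
    (τ : ℝ) (hτ : τ = (star d ⬝ᵥ (G⁻¹ *ᵥ d)).re) :
    (0 ≤ τ ∧ τ < 1) ∧
    (∀ x : n → ℂ, x ≠ 0 →
      ‖star x ⬝ᵥ d‖ ^ 2 / (star x ⬝ᵥ ((G - vecMulVec d (star d)) *ᵥ x)).re
        ≤ τ / (1 - τ)) ∧
    (d ≠ 0 →
      ‖star (G⁻¹ *ᵥ d) ⬝ᵥ d‖ ^ 2 /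
          (star (G⁻¹ *ᵥ d) ⬝ᵥ ((G - vecMulVec d (star d)) *ᵥ (G⁻¹ *ᵥ d))).re
        = τ / (1 - τ)) := by
  have hτ0 : 0 ≤ τ := hτ ▸ hG.inv.posSemidef.re_dotProduct_nonneg d
  have hnum := hG.star_inv_mulVec_dotProduct d
  have hopt := hG.re_star_inv_mulVec_dotProduct_sub_vecMulVec d
  simp only [RCLike.re_to_complex, ← hτ] at hnum hopt
  have hopt_pos (hd : d ≠ 0) : 0 < τ - τ ^ 2 := by
    have he : G⁻¹ *ᵥ d ≠ 0 := fun he ↦ hd (by rw [← hG.mulVec_inv_mulVec d, he, mulVec_zero])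
    simpa only [RCLike.re_to_complex, hopt] using hGd.re_dotProduct_pos he
  have hτ1 : τ < 1 := by
    rcases eq_or_ne d 0 with rfl | hd
    · simp [hτ]
    · nlinarith [hopt_pos hd]
  refine ⟨⟨hτ0, hτ1⟩, fun x hx ↦ ?_, fun hd ↦ ?_⟩
  · have hden := re_star_dotProduct_sub_vecMulVec_mulVec G d x
    have hpos := hGd.re_dotProduct_pos hx
    have hcs := hG.norm_star_dotProduct_sq_le x d
    simp only [RCLike.re_to_complex, ← hτ] at hden hpos hcs
    rw [hden] at hpos ⊢
    rw [div_le_div_iff₀ hpos (by linarith)]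
    nlinarith
  · rw [hnum, RCLike.norm_ofReal, sq_abs, hopt, div_eq_div_iff (hopt_pos hd).ne' (by linarith)]
    ring

/-- Theorem 6 of the paper: with `G` and `G - d d*` positive definite and
`τ = Re(d* ⬝ G⁻¹ d)` (so `0 ≤ τ < 1`), the SINR `|x* ⬝ d|² / Re(x* ⬝ ((G - d d*) x))`
of every nonzero detector `x` is at most `τ / (1 - τ)`, with equality attained at the
optimal detector `x = G⁻¹ d` when `d ≠ 0`. -/
theorem stmt_12 {n : Type*} [Fintype n] [DecidableEq n] [Nonempty n]
    (G : Matrix n n ℂ) (hG : G.PosDef) (d : n → ℂ)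
    (hGd : (G - vecMulVec d (star d)).PosDef)
    (τ : ℝ) (hτ : τ = (star d ⬝ᵥ (G⁻¹ *ᵥ d)).re) :
    (0 ≤ τ ∧ τ < 1) ∧
    (∀ x : n → ℂ, x ≠ 0 →
      ‖star x ⬝ᵥ d‖ ^ 2 / (star x ⬝ᵥ ((G - vecMulVec d (star d)) *ᵥ x)).re
        ≤ τ / (1 - τ)) ∧
    (d ≠ 0 →
      ‖star (G⁻¹ *ᵥ d) ⬝ᵥ d‖ ^ 2 /
          (star (G⁻¹ *ᵥ d) ⬝ᵥ ((G - vecMulVec d (star d)) *ᵥ (G⁻¹ *ᵥ d))).re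
        = τ / (1 - τ)) :=
  stmt_12_general G hG d hGd τ hτ
end
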